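/- arXiv:1607.00762 — 5 statements merged into one kernel-verified Lean document; each statement's English description precedes it below -/
import Mathlib

section
/- Let h be the histogram of an NCC word of length n over {0,...,q-1} such that every nonzero entry of h satisfies h_i > 2t. Then h is not t-confusable as any other NCC histogram: there do not exist error vectors e, f ∈ ℕ^q with e_0 = f_0 = 0, e ≤ h (componentwise), ‖f‖₁ ≤ ‖e‖₁ ≤ t, e ≠ f, such that h + T e = g + T f for some NCC histogram g ≠ h with f ≤ g. -/
/-- If every nonzero entry of an NCC histogram `h` exceeds `2t`, then `h` is
not `t`-confusable as any other NCC histogram: no error vectors `e, f` with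
`e₀ = f₀ = 0`, `e ≤ h`, `f ≤ g`, `‖f‖₁ ≤ ‖e‖₁ ≤ t`, `e ≠ f` can satisfy
`h + T e = g + T f` for an NCC histogram `g ≠ h` of the same length.
Histograms and error vectors are encoded as functions `ℕ → ℕ` supported on
`{0,…,q-1}`; the `i`-th entry of `T e` is `e_{i+1} - e_i`. -/
theorem ncc_not_confusable (q n t : ℕ) (ht : 1 ≤ t)
    (h : ℕ → ℕ) (hsupp : ∀ i, q ≤ i → h i = 0)
    (hsum : ∑ i ∈ Finset.range q, h i = n)
    (hncc : ∀ i, h i * h (i + 1) = 0)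
    (hbig : ∀ i, h i ≠ 0 → 2 * t < h i) :
    ¬ ∃ (g e f : ℕ → ℕ),
        (∀ i, q ≤ i → g i = 0) ∧ (∀ i, q ≤ i → e i = 0) ∧
        (∀ i, q ≤ i → f i = 0) ∧
        (∑ i ∈ Finset.range q, g i = n) ∧
        (∀ i, g i * g (i + 1) = 0) ∧ g ≠ h ∧
        e 0 = 0 ∧ f 0 = 0 ∧ (∀ i, e i ≤ h i) ∧ (∀ i, f i ≤ g i) ∧
        (∑ i ∈ Finset.range q, f i) ≤ (∑ i ∈ Finset.range q, e i) ∧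
        (∑ i ∈ Finset.range q, e i) ≤ t ∧ e ≠ f ∧
        (∀ i, (h i : ℤ) + e (i + 1) - e i = (g i : ℤ) + f (i + 1) - f i) := by
  rintro ⟨g, e, f, hgsupp, hesupp, hfsupp, hgsum, hgncc, hgne, he0, hf0, heh, hfg,
    hfe, het, hef, heq⟩
  -- pointwise bounds on the error vectors
  have het' : ∀ i, e i ≤ t := by
    intro i
    by_cases hi : i < q
    · exact le_trans
        (Finset.single_le_sum (fun j _ => Nat.zero_le _) (Finset.mem_range.2 hi)) het
    · simp [hesupp i (le_of_not_gt hi)]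
  have hft' : ∀ i, f i ≤ t := by
    intro i
    by_cases hi : i < q
    · exact le_trans
        (Finset.single_le_sum (fun j _ => Nat.zero_le _) (Finset.mem_range.2 hi))
        (le_trans hfe het)
    · simp [hfsupp i (le_of_not_gt hi)]
  -- L1 : the support of h is contained in the support of g
  have L1 : ∀ i, h i ≠ 0 → g i ≠ 0 := by
    intro i hi hgi
    have hb := hbig i hi
    have hq := heq i
    have h1 := het' i
    have h2 := hft' (i + 1)
    rw [hgi] at hq
    omega
  -- L2 : the support of g is contained in the support of h
  have L2 : ∀ i, h i = 0 → g i = 0 := by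
    intro i hi
    by_contra hgi
    have hg1 : g (i + 1) = 0 :=
      (Nat.mul_eq_zero.1 (hgncc i)).resolve_left hgi
    have hh1 : h (i + 1) = 0 := by
      by_contra hh
      exact L1 _ hh hg1
    have hei : e i = 0 := Nat.le_zero.1 (hi ▸ heh i)
    have he1 : e (i + 1) = 0 := Nat.le_zero.1 (hh1 ▸ heh (i + 1))
    have hf1 : f (i + 1) = 0 := Nat.le_zero.1 (hg1 ▸ hfg (i + 1))
    have hfi : f i = 0 := by
      cases i with
      | zero => exact hf0
      | succ j =>
        have hgj : g j = 0 :=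
          (Nat.mul_eq_zero.1 (hgncc j)).resolve_right hgi
        have hhj : h j = 0 := by
          by_contra hh
          exact L1 _ hh hgj
        have hej : e j = 0 := Nat.le_zero.1 (hhj ▸ heh j)
        have hfj : f j = 0 := Nat.le_zero.1 (hgj ▸ hfg j)
        have hq := heq j
        rw [hhj, hgj, hej, hfj] at hq
        omega
    have hq := heq i
    rw [hi, hei, he1, hf1, hfi] at hq
    omega
  -- conclude g = h, contradiction
  apply hgne
  funext i
  by_cases hi : h i = 0
  · rw [L2 i hi, hi]
  · have hh1 : h (i + 1) = 0 :=
      (Nat.mul_eq_zero.1 (hncc i)).resolve_left hi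
    have hg1 : g (i + 1) = 0 := L2 _ hh1
    have he1 : e (i + 1) = 0 := Nat.le_zero.1 (hh1 ▸ heh (i + 1))
    have hf1 : f (i + 1) = 0 := Nat.le_zero.1 (hg1 ▸ hfg (i + 1))
    have heif : e i = f i := by
      cases i with
      | zero => rw [he0, hf0]
      | succ j =>
        have hhj : h j = 0 :=
          (Nat.mul_eq_zero.1 (hncc j)).resolve_right hi
        have hgj : g j = 0 := L2 _ hhj
        have hej : e j = 0 := Nat.le_zero.1 (hhj ▸ heh j)
        have hfj : f j = 0 := Nat.le_zero.1 (hgj ▸ hfg j)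
        have hq := heq j
        rw [hhj, hgj, hej, hfj] at hq
        omega
    have hq := heq i
    rw [he1, hf1] at hq
    omega
end

section
/- Suppose NCC histograms h and g (of the same length n) satisfy h + T e = g + T f for error vectors e, f ∈ ℕ^q with e_0 = f_0 = 0, e ≤ h, f ≤ g. Then for every index i ∈ {1,...,q-2}: h_i·[(e_i - e_{i-1}) - (f_i - f_{i-1})] + h_{i-1}·[(e_{i+1} - e_i) - (f_{i+1} - f_i)] + [(e_i - e_{i-1}) - (f_i - f_{i-1})]·[(e_{i+1} - e_i) - (f_{i+1} - f_i)] = 0. -/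
/-- If NCC histograms `h` and `g` satisfy `h + T e = g + T f` for error vectors
`e ≤ h`, `f ≤ g` with `e₀ = f₀ = 0`, then for every `1 ≤ i ≤ q-2`:
`h_i·[(e_i-e_{i-1})-(f_i-f_{i-1})] + h_{i-1}·[(e_{i+1}-e_i)-(f_{i+1}-f_i)]
 + [(e_i-e_{i-1})-(f_i-f_{i-1})]·[(e_{i+1}-e_i)-(f_{i+1}-f_i)] = 0`.
Vectors are encoded as functions `ℕ → ℕ` supported on `{0,…,q-1}`; the `i`-th
entry of `T e` is `e_{i+1} - e_i`. -/
theorem ncc_confusable_elementwise (q n : ℕ) (h g e f : ℕ → ℕ)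
    (hsupp : ∀ i, q ≤ i → h i = 0) (gsupp : ∀ i, q ≤ i → g i = 0)
    (esupp : ∀ i, q ≤ i → e i = 0) (fsupp : ∀ i, q ≤ i → f i = 0)
    (hsum : ∑ i ∈ Finset.range q, h i = n)
    (gsum : ∑ i ∈ Finset.range q, g i = n)
    (hncc : ∀ i, h i * h (i + 1) = 0) (gncc : ∀ i, g i * g (i + 1) = 0)
    (he0 : e 0 = 0) (hf0 : f 0 = 0)
    (heh : ∀ i, e i ≤ h i) (hfg : ∀ i, f i ≤ g i)
    (heq : ∀ i, (h i : ℤ) + e (i + 1) - e i = (g i : ℤ) + f (i + 1) - f i) :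
    ∀ i : ℕ, 1 ≤ i → i + 1 < q →
      (h i : ℤ) * (((e i : ℤ) - e (i - 1)) - ((f i : ℤ) - f (i - 1)))
        + (h (i - 1) : ℤ) * (((e (i + 1) : ℤ) - e i) - ((f (i + 1) : ℤ) - f i))
        + (((e i : ℤ) - e (i - 1)) - ((f i : ℤ) - f (i - 1)))
          * (((e (i + 1) : ℤ) - e i) - ((f (i + 1) : ℤ) - f i)) = 0 := by
  intro i hi hq
  have h1 : i - 1 + 1 = i := Nat.succ_pred_eq_of_pos hi
  have e1 := heq (i - 1); rw [h1] at e1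
  have e2 := heq i
  have hn := hncc (i - 1); rw [h1] at hn
  have gn := gncc (i - 1); rw [h1] at gn
  have hn' : (h (i - 1) : ℤ) * h i = 0 := by exact_mod_cast hn
  have gn' : (g (i - 1) : ℤ) * g i = 0 := by exact_mod_cast gn
  linear_combination ((h i : ℤ) + ((e (i + 1) : ℤ) - e i - ((f (i + 1) : ℤ) - f i))) * e1
    + (g (i - 1) : ℤ) * e2 + gn' - hn'
end

section
/- For fixed even q ≥ 2, the probability that a uniformly random NCC word of length n over {0,...,q-1} occupies exactly q/2 levels tends to 1 as n → ∞. Formally: (q/2)! · S(n, q/2) · (q/2 + 1) divided by ∑_{k=1}^{q/2} k! · S(n,k) · C(q-k+1,k) tends to 1 as n → ∞. -/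
/-!
Write `m = q / 2`. The `k = m` summand of the denominator is exactly the numerator, since
`C(m + 1, m) = m + 1`. Every other summand has `k < m`, and `S(n, k) ≤ k ^ n` while
`m ^ (n - m) ≤ S(n, m)`, so it is `o(S(n, m))`; hence the denominator is asymptotic to the
numerator.
-/

open Filter

/-- Stirling numbers of the second kind. -/
def stirling : ℕ → ℕ → ℕ
  | 0, 0 => 1
  | 0, _ + 1 => 0
  | _ + 1, 0 => 0
  | n + 1, k + 1 => stirling n k + (k + 1) * stirling n (k + 1)

open Asymptotics

theorem stirling_eq_stirlingSecond : stirling = Nat.stirlingSecond := by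
  funext n k
  induction n generalizing k with
  | zero => cases k <;> rfl
  | succ n ih =>
    cases k with
    | zero => rfl
    | succ k => rw [stirling, Nat.stirlingSecond_succ_succ, ih, ih, add_comm]

theorem Asymptotics.IsLittleO.tendsto_div_self_add {α 𝕜 : Type*} [NormedField 𝕜]
    {l : Filter α} {u v : α → 𝕜} (huv : u =o[l] v) (hv : ∀ᶠ x in l, v x ≠ 0) :
    Tendsto (fun x => v x / (v x + u x)) l (nhds 1) := by
  have h := (isEquivalent_iff_tendsto_one hv).mp (IsEquivalent.refl.add_isLittleO huv)
  simpa only [Pi.div_apply, Pi.add_apply, inv_div, inv_one] using h.inv₀ one_ne_zero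

namespace Nat

theorem stirlingSecond_zero_right (n : ℕ) : stirlingSecond n 0 = 0 ^ n := by
  cases n <;> rfl

-- `(k + 1) ^ n - k ^ n` counts the maps `Fin n → Fin (k + 1)` hitting the last point; the bound
-- `stirlingSecond n k ≤ k ^ n` alone is too weak to carry the induction.
theorem stirlingSecond_succ_add_pow_le (n k : ℕ) :
    stirlingSecond n (k + 1) + k ^ n ≤ (k + 1) ^ n := by
  induction n generalizing k with
  | zero => simp
  | succ n ih =>
    rw [stirlingSecond_succ_succ]
    cases k with
    | zero => simpa [stirlingSecond_zero_right] using ih 0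
    | succ k =>
      have hk := ih k
      have hk1 := Nat.mul_le_mul_left (k + 2) (ih (k + 1))
      ring_nf at hk hk1 ⊢
      omega

theorem stirlingSecond_le_pow (n k : ℕ) : stirlingSecond n k ≤ k ^ n := by
  cases k with
  | zero => exact (stirlingSecond_zero_right n).le
  | succ k => exact le_of_add_le_left (stirlingSecond_succ_add_pow_le n k)

theorem pow_le_stirlingSecond_add (k t : ℕ) : k ^ t ≤ stirlingSecond (k + t) k := by
  induction t with
  | zero => simp [stirlingSecond_self]
  | succ t ih =>
    rcases eq_or_ne k 0 with rfl | hk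
    · simp
    · rw [← add_assoc, stirlingSecond_succ_left _ _ hk, pow_succ']
      exact (Nat.mul_le_mul_left k ih).trans (Nat.le_add_right _ _)

theorem stirlingSecond_pos {n k : ℕ} (hk : 0 < k) (hkn : k ≤ n) : 0 < stirlingSecond n k := by
  obtain ⟨t, rfl⟩ := Nat.exists_eq_add_of_le hkn
  exact (pow_pos hk t).trans_le (pow_le_stirlingSecond_add k t)

theorem isBigO_pow_stirlingSecond (k : ℕ) :
    (fun n : ℕ => (k : ℝ) ^ n) =O[atTop] fun n => (stirlingSecond n k : ℝ) := by
  refine IsBigO.of_bound ((k : ℝ) ^ k) ?_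
  filter_upwards [eventually_ge_atTop k] with n hn
  obtain ⟨t, rfl⟩ := Nat.exists_eq_add_of_le hn
  rw [Real.norm_natCast, pow_add, Real.norm_of_nonneg (by positivity)]
  gcongr
  exact_mod_cast pow_le_stirlingSecond_add k t

theorem isLittleO_stirlingSecond_of_lt {j k : ℕ} (hjk : j < k) :
    (fun n : ℕ => (stirlingSecond n j : ℝ)) =o[atTop] fun n => (stirlingSecond n k : ℝ) := by
  have hj : (fun n : ℕ => (stirlingSecond n j : ℝ)) =O[atTop] fun n => (j : ℝ) ^ n :=
    IsBigO.of_bound' (Eventually.of_forall fun n => by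
      simpa using (Nat.cast_le (α := ℝ)).mpr (stirlingSecond_le_pow n j))
  exact hj.trans_isLittleO <| (isLittleO_pow_pow_of_lt_left (Nat.cast_nonneg j)
    (Nat.cast_lt.mpr hjk)).trans_isBigO (isBigO_pow_stirlingSecond k)

end Nat

/-- For fixed even `q ≥ 2`, the fraction of NCC words of length `n` occupying
exactly `q/2` levels tends to `1` as `n → ∞`. -/
theorem prob_full_occupancy_tendsto_one (q : ℕ) (hq : Even q) (hq2 : 2 ≤ q) :
    Tendsto (fun n : ℕ =>
        ((Nat.factorial (q / 2) * stirling n (q / 2) * (q / 2 + 1) : ℕ) : ℝ) /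
          ((∑ k ∈ Finset.Icc 1 (q / 2),
            Nat.factorial k * stirling n k * Nat.choose (q - k + 1) k : ℕ) : ℝ))
      atTop (nhds 1) := by
  obtain ⟨m, rfl⟩ := hq
  rw [show (m + m) / 2 = m by omega, stirling_eq_stirlingSecond,
    Finset.Icc_eq_cons_Ico (by omega)]
  simp only [Finset.sum_cons]
  rw [show m + m - m + 1 = m + 1 by omega, Nat.choose_succ_self_right]
  push_cast
  simp only [mul_right_comm _ (Nat.stirlingSecond _ _ : ℝ)]
  refine IsLittleO.tendsto_div_self_add (IsLittleO.fun_sum fun k hk => ?_) ?_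
  · exact ((Nat.isLittleO_stirlingSecond_of_lt (Finset.mem_Ico.mp hk).2).const_mul_left _)
      |>.const_mul_right (by positivity)
  · filter_upwards [eventually_ge_atTop m] with n hn
    have := Nat.stirlingSecond_pos (by omega : 0 < m) hn
    positivity
end

section
/- For all integers n, h, t with 1 ≤ h ≤ 2t and t ≤ n: ∑_{j=0}^{⌊h/2⌋} C(h, ⌈h/2⌉+j) · C(n-h, t-⌈h/2⌉-j) ≤ 2^{h-1} · C(n-1, t-⌈h/2⌉), where C(a,b) = 0 when b < 0 or b > a. -/
def chooseZ (a : ℕ) (b : ℤ) : ℕ :=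
  if 0 ≤ b then a.choose b.toNat else 0

lemma choose_pair_le (m k : ℕ) : m.choose k + m.choose (k + 1) ≤ 2 ^ m := by
  rcases le_or_gt (k + 1) m with hk | hk
  · have hsub : ({k, k + 1} : Finset ℕ) ⊆ Finset.range (m + 1) := by
      intro x hx
      simp only [Finset.mem_insert, Finset.mem_singleton] at hx
      rcases hx with rfl | rfl <;> exact Finset.mem_range.mpr (by omega)
    calc m.choose k + m.choose (k + 1)
        = ∑ i ∈ ({k, k + 1} : Finset ℕ), m.choose i := by
          rw [Finset.sum_pair (by omega)]
      _ ≤ ∑ i ∈ Finset.range (m + 1), m.choose i :=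
          Finset.sum_le_sum_of_subset hsub
      _ = 2 ^ m := Nat.sum_range_choose m
  · have h1 : m.choose (k + 1) = 0 := Nat.choose_eq_zero_of_lt hk
    rw [h1, Nat.add_zero]
    rcases le_or_gt k m with hk2 | hk2
    · calc m.choose k ≤ ∑ i ∈ Finset.range (m + 1), m.choose i :=
            Finset.single_le_sum (fun i _ => Nat.zero_le _)
              (Finset.mem_range.mpr (by omega))
        _ = 2 ^ m := Nat.sum_range_choose m
    · rw [Nat.choose_eq_zero_of_lt hk2]; exact Nat.zero_le _

lemma choose_le_two_pow_pred (h k : ℕ) (h1 : 1 ≤ h) : h.choose k ≤ 2 ^ (h - 1) := by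
  obtain ⟨h', rfl⟩ : ∃ h', h = h' + 1 := ⟨h - 1, by omega⟩
  simp only [Nat.add_sub_cancel]
  cases k with
  | zero => simpa using Nat.one_le_two_pow
  | succ k' => rw [Nat.choose_succ_succ]; exact choose_pair_le h' k'

lemma vandermonde_range (a b k : ℕ) :
    ∑ j ∈ Finset.range (k + 1), a.choose j * b.choose (k - j) = (a + b).choose k := by
  rw [Nat.add_choose_eq, Finset.Nat.sum_antidiagonal_eq_sum_range_succ_mk]

/-- For `1 ≤ h ≤ 2t` and `t ≤ n`:
`∑_{j=0}^{⌊h/2⌋} C(h,⌈h/2⌉+j)·C(n-h, t-⌈h/2⌉-j) ≤ 2^{h-1}·C(n-1, t-⌈h/2⌉)`,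
with the convention `C(a,b) = 0` for `b < 0` or `b > a`. -/
theorem sum_failure_patterns_le (n t h : ℕ) (h1 : 1 ≤ h) (h2 : h ≤ 2 * t)
    (htn : t ≤ n) :
    ∑ j ∈ Finset.range (h / 2 + 1),
        Nat.choose h ((h + 1) / 2 + j) *
          chooseZ (n - h) ((t : ℤ) - ((h + 1) / 2 : ℕ) - (j : ℕ)) ≤
      2 ^ (h - 1) * chooseZ (n - 1) ((t : ℤ) - ((h + 1) / 2 : ℕ)) := by
  set c := (h + 1) / 2 with hc
  set m := h / 2 with hm
  have hct : c ≤ t := by omega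
  have hRHS : chooseZ (n - 1) ((t : ℤ) - c) = (n - 1).choose (t - c) := by
    unfold chooseZ
    rw [if_pos (by omega)]
    congr 1
    omega
  have hge : 1 ≤ (n - 1).choose (t - c) := Nat.choose_pos (by omega)
  rw [hRHS]
  rcases le_or_gt h n with hhn | hhn
  · -- main case: h ≤ n, use Vandermonde
    have step1 : ∀ j ∈ Finset.range (m + 1),
        h.choose (c + j) * chooseZ (n - h) ((t : ℤ) - c - j) ≤
          2 ^ (h - 1) * ((h - 1).choose j * chooseZ (n - h) ((t : ℤ) - c - j)) := by
      intro j hj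
      simp only [Finset.mem_range] at hj
      have hle : h.choose (c + j) ≤ 2 ^ (h - 1) * (h - 1).choose j := by
        have hpos : 1 ≤ (h - 1).choose j := Nat.choose_pos (by omega)
        calc h.choose (c + j) ≤ 2 ^ (h - 1) := choose_le_two_pow_pred h _ h1
          _ ≤ 2 ^ (h - 1) * (h - 1).choose j := Nat.le_mul_of_pos_right _ hpos
      calc h.choose (c + j) * chooseZ (n - h) ((t : ℤ) - c - j)
          ≤ 2 ^ (h - 1) * (h - 1).choose j * chooseZ (n - h) ((t : ℤ) - c - j) :=
            Nat.mul_le_mul_right _ hle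
        _ = 2 ^ (h - 1) * ((h - 1).choose j * chooseZ (n - h) ((t : ℤ) - c - j)) := by
            ring
    refine le_trans (Finset.sum_le_sum step1) ?_
    rw [← Finset.mul_sum]
    apply Nat.mul_le_mul_left
    have hterm : ∀ j : ℕ, (h - 1).choose j * chooseZ (n - h) ((t : ℤ) - c - j) =
        if c + j ≤ t then (h - 1).choose j * (n - h).choose (t - c - j) else 0 := by
      intro j
      unfold chooseZ
      rcases le_or_gt (c + j) t with hj | hj
      · rw [if_pos (by omega), if_pos hj]
        congr 2
        omega
      · rw [if_neg (by omega), if_neg (by omega), Nat.mul_zero]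
    calc ∑ j ∈ Finset.range (m + 1), (h - 1).choose j * chooseZ (n - h) ((t : ℤ) - c - j)
        = ∑ j ∈ Finset.range (m + 1),
            (if c + j ≤ t then (h - 1).choose j * (n - h).choose (t - c - j) else 0) :=
          Finset.sum_congr rfl fun j _ => hterm j
      _ ≤ ∑ j ∈ Finset.range (m + 1 + (t - c + 1)),
            (if c + j ≤ t then (h - 1).choose j * (n - h).choose (t - c - j) else 0) :=
          Finset.sum_le_sum_of_subset (Finset.range_subset_range.mpr (by omega))
      _ = ∑ j ∈ Finset.range (t - c + 1), (h - 1).choose j * (n - h).choose (t - c - j) := by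
          rw [← Finset.sum_subset
            (Finset.range_subset_range.mpr (by omega : t - c + 1 ≤ m + 1 + (t - c + 1)))]
          · exact Finset.sum_congr rfl fun j hj => by
              rw [if_pos (by simp only [Finset.mem_range] at hj; omega)]
          · intro x hx hnx
            simp only [Finset.mem_range] at hx hnx
            rw [if_neg (by omega)]
      _ = (h - 1 + (n - h)).choose (t - c) := vandermonde_range _ _ _
      _ = (n - 1).choose (t - c) := by congr 1; omega
  · -- degenerate case h > n : n - h = 0, at most one nonzero term
    have hnh : n - h = 0 := by omega
    have hZ : ∀ j : ℕ, chooseZ (n - h) ((t : ℤ) - c - j) = if j = t - c then 1 else 0 := by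
      intro j
      unfold chooseZ
      rw [hnh]
      rcases le_or_gt (c + j) t with hj | hj
      · rw [if_pos (by omega)]
        rcases eq_or_ne j (t - c) with hjeq | hjne
        · rw [if_pos hjeq]
          have : ((t : ℤ) - c - j).toNat = 0 := by omega
          rw [this, Nat.choose_zero_right]
        · rw [if_neg hjne]
          exact Nat.choose_eq_zero_of_lt (by omega)
      · rw [if_neg (by omega), if_neg (by omega)]
    have step : ∀ j ∈ Finset.range (m + 1),
        h.choose (c + j) * chooseZ (n - h) ((t : ℤ) - c - j) ≤
          2 ^ (h - 1) * (if j = t - c then 1 else 0) := by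
      intro j _
      rw [hZ j]
      exact Nat.mul_le_mul (choose_le_two_pow_pred h _ h1) le_rfl
    refine le_trans (Finset.sum_le_sum step) ?_
    rw [← Finset.mul_sum]
    apply Nat.mul_le_mul_left
    rw [Finset.sum_ite_eq' (Finset.range (m + 1)) (t - c) (fun _ => 1)]
    split
    · exact hge
    · exact Nat.zero_le _
end

section
/- In the even/odd code of length n over {0,...,q-1} (q even), any pattern of at most ⌊(n-1)/2⌋ asymmetric magnitude-1 (downward) errors can be corrected: if two codewords c, c' of the even/odd code and error patterns each affecting at most ⌊(n-1)/2⌋ coordinates by decreasing them by 1 produce the same received word, then c = c'. -/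
/-- The even/odd code corrects up to `⌊(n-1)/2⌋` asymmetric magnitude-1
downward errors: if two even/odd codewords over `{0,…,q-1}` produce the same
received word after each suffers magnitude-1 decrements on at most
`⌊(n-1)/2⌋` coordinates, then the codewords are equal. -/
theorem even_odd_corrects (n q : ℕ) (hq : Even q) (hq2 : 2 ≤ q)
    (c c' y : Fin n → ℕ)
    (hc : ∀ s, c s < q) (hc' : ∀ s, c' s < q)
    (hcode : (∀ s, Even (c s)) ∨ (∀ s, Odd (c s)))
    (hcode' : (∀ s, Even (c' s)) ∨ (∀ s, Odd (c' s)))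
    (S S' : Finset (Fin n))
    (hS : S.card ≤ (n - 1) / 2) (hS' : S'.card ≤ (n - 1) / 2)
    (hSpos : ∀ s ∈ S, 1 ≤ c s) (hS'pos : ∀ s ∈ S', 1 ≤ c' s)
    (hy : ∀ s, y s = if s ∈ S then c s - 1 else c s)
    (hy' : ∀ s, y s = if s ∈ S' then c' s - 1 else c' s) :
    c = c' := by
  have key : ∀ s, (if s ∈ S then c s - 1 else c s)
      = (if s ∈ S' then c' s - 1 else c' s) := fun s => by rw [← hy, ← hy']
  -- same parity class case
  have same : (∀ s, c s % 2 = c' s % 2) → c = c' := by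
    intro hpar
    funext s
    have e := key s
    have hps := hpar s
    by_cases h : s ∈ S <;> by_cases h' : s ∈ S'
    · rw [if_pos h, if_pos h'] at e
      have := hSpos s h; have := hS'pos s h'; omega
    · rw [if_pos h, if_neg h'] at e
      have := hSpos s h; omega
    · rw [if_neg h, if_pos h'] at e
      have := hS'pos s h'; omega
    · rw [if_neg h, if_neg h'] at e; exact e
  -- mixed parity case is impossible (when n > 0)
  have mixed : (∀ s, c s % 2 ≠ c' s % 2) → c = c' := by
    intro hpar
    funext s
    exfalso
    have hn : 0 < n := s.pos
    have hne : ∀ t, t ∈ S ↔ t ∉ S' := by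
      intro t
      have e := key t
      have hpt := hpar t
      constructor
      · intro h h'
        rw [if_pos h, if_pos h'] at e
        have := hSpos t h; have := hS'pos t h'; omega
      · intro h'
        by_contra h
        rw [if_neg h, if_neg h'] at e; omega
    have hS'eq : S' = Sᶜ := by
      ext t
      simp only [Finset.mem_compl]
      have := hne t; tauto
    have hcard : S.card + S'.card = n := by
      rw [hS'eq]
      simpa using Finset.card_add_card_compl S
    omega
  rcases hcode with h1 | h1 <;> rcases hcode' with h2 | h2
  · exact same fun s => by
      have a := h1 s; have b := h2 s
      rw [Nat.even_iff] at a b; omega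
  · exact mixed fun s => by
      have a := h1 s; have b := h2 s
      rw [Nat.even_iff] at a; rw [Nat.odd_iff] at b; omega
  · exact mixed fun s => by
      have a := h1 s; have b := h2 s
      rw [Nat.odd_iff] at a; rw [Nat.even_iff] at b; omega
  · exact same fun s => by
      have a := h1 s; have b := h2 s
      rw [Nat.odd_iff] at a b; omega
end
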